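/- Let H^c and H^p be Hopf algebras, δ : H^p → H^p ⊗ H^c a map satisfying (δ ⊗ Id)δ = (Id ⊗ Δ^c)δ and (Δ^p ⊗ Id)δ = m³₂₄(δ ⊗ δ)Δ^p, and σ : H^p → H^c a linear map such that Δ^c ∘ σ = (σ ⊗ Id) ∘ δ^σ, where δ^σ := m²₂₃ ∘ (δ ⊗ σ) ∘ Δ^p. Then δ^σ is coassociative with respect to Δ^c, i.e. (δ^σ ⊗ Id)δ^σ = (Id ⊗ Δ^c)δ^σ. -/

import Mathlib

set_option maxHeartbeats 2000000
set_option synthInstance.maxHeartbeats 400000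

open TensorProduct

variable {C P : Type*} [Ring C] [Ring P] [HopfAlgebra ℂ C] [HopfAlgebra ℂ P]

/-- The map δ^σ := m²₂₃ ∘ (δ ⊗ σ) ∘ Δᵖ : Hᵖ → Hᵖ ⊗ H^c, where m²₂₃ multiplies the
tensor factors in positions 2 and 3 (both in H^c) into position 2. -/
noncomputable def deltaSigma (δ : P →ₗ[ℂ] P ⊗[ℂ] C) (σ : P →ₗ[ℂ] C) :
    P →ₗ[ℂ] P ⊗[ℂ] C :=
  (TensorProduct.map LinearMap.id (LinearMap.mul' ℂ C)) ∘ₗ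
    (TensorProduct.assoc ℂ P C C).toLinearMap ∘ₗ
      (TensorProduct.map δ σ) ∘ₗ (Coalgebra.comul : P →ₗ[ℂ] P ⊗[ℂ] P)

/-- Auxiliary structural map Ψ : ((P⊗P)⊗C)⊗P → P⊗(C⊗C),
Ψ((a⊗b)⊗c⊗z) = Σ a⁰ ⊗ (a¹·σ(b) ⊗ c·σ(z)). -/
noncomputable def auxPsi (δ : P →ₗ[ℂ] P ⊗[ℂ] C) (σ : P →ₗ[ℂ] C) :
    ((P ⊗[ℂ] P) ⊗[ℂ] C) ⊗[ℂ] P →ₗ[ℂ] P ⊗[ℂ] (C ⊗[ℂ] C) :=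
  (TensorProduct.map LinearMap.id
      (TensorProduct.map (LinearMap.mul' ℂ C) (LinearMap.mul' ℂ C))) ∘ₗ
    (TensorProduct.assoc ℂ P (C ⊗[ℂ] C) (C ⊗[ℂ] C)).toLinearMap ∘ₗ
      (TensorProduct.map (TensorProduct.assoc ℂ P C C).toLinearMap LinearMap.id) ∘ₗ
        (TensorProduct.assoc ℂ ((P ⊗[ℂ] C) ⊗[ℂ] C) C C).toLinearMap ∘ₗ
          (TensorProduct.map (TensorProduct.map (TensorProduct.map δ σ) LinearMap.id) σ)

/-- Auxiliary structural map Θ : P⊗(P⊗P) → P⊗(C⊗C),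
Θ(p⊗(q⊗r)) = Σ p⁰⁰ ⊗ (p⁰¹·σ(q⁰) ⊗ p¹·(q¹·σ(r))). -/
noncomputable def auxTheta (δ : P →ₗ[ℂ] P ⊗[ℂ] C) (σ : P →ₗ[ℂ] C) :
    P ⊗[ℂ] (P ⊗[ℂ] P) →ₗ[ℂ] P ⊗[ℂ] (C ⊗[ℂ] C) :=
  (TensorProduct.map LinearMap.id
      (TensorProduct.map (LinearMap.mul' ℂ C) (LinearMap.mul' ℂ C))) ∘ₗ
    (TensorProduct.map LinearMap.id
      (TensorProduct.tensorTensorTensorComm ℂ C C C C).toLinearMap) ∘ₗ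
      (TensorProduct.assoc ℂ P (C ⊗[ℂ] C) (C ⊗[ℂ] C)).toLinearMap ∘ₗ
        (TensorProduct.map
          ((TensorProduct.assoc ℂ P C C).toLinearMap ∘ₗ
            (TensorProduct.map δ LinearMap.id) ∘ₗ δ)
          ((TensorProduct.map σ (LinearMap.mul' ℂ C)) ∘ₗ
            (TensorProduct.assoc ℂ P C C).toLinearMap ∘ₗ (TensorProduct.map δ σ)))

/-- Let H^c, H^p be Hopf algebras, δ : H^p → H^p ⊗ H^c a map satisfying
(δ ⊗ Id)δ = (Id ⊗ Δ^c)δ and (Δ^p ⊗ Id)δ = m³₂₄(δ ⊗ δ)Δ^p, and σ : H^p → H^c a linear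
map intertwining δ^σ and Δ^c.  Then δ^σ is coassociative with respect to Δ^c. -/
theorem deltaSigma_coassoc (δ : P →ₗ[ℂ] P ⊗[ℂ] C) (σ : P →ₗ[ℂ] C)
    (h1 : ∀ x : P,
      (TensorProduct.assoc ℂ P C C) ((TensorProduct.map δ LinearMap.id) (δ x)) =
        (TensorProduct.map LinearMap.id (Coalgebra.comul : C →ₗ[ℂ] C ⊗[ℂ] C)) (δ x))
    (h2 : ∀ x : P,
      (TensorProduct.map (Coalgebra.comul : P →ₗ[ℂ] P ⊗[ℂ] P) LinearMap.id) (δ x) =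
        (TensorProduct.map LinearMap.id (LinearMap.mul' ℂ C))
          ((TensorProduct.tensorTensorTensorComm ℂ P C P C)
            ((TensorProduct.map δ δ)
              ((Coalgebra.comul : P →ₗ[ℂ] P ⊗[ℂ] P) x))))
    (h3 : ∀ x : P,
      (Coalgebra.comul : C →ₗ[ℂ] C ⊗[ℂ] C) (σ x) =
        (TensorProduct.map σ LinearMap.id) (deltaSigma δ σ x)) :
    ∀ x : P,
      (TensorProduct.assoc ℂ P C C)
          ((TensorProduct.map (deltaSigma δ σ) LinearMap.id) (deltaSigma δ σ x)) =
        (TensorProduct.map LinearMap.id (Coalgebra.comul : C →ₗ[ℂ] C ⊗[ℂ] C))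
          (deltaSigma δ σ x) := by
  intro x
  -- abbreviations
  set m : C ⊗[ℂ] C →ₗ[ℂ] C := LinearMap.mul' ℂ C with hm
  set Δp : P →ₗ[ℂ] P ⊗[ℂ] P := (Coalgebra.comul : P →ₗ[ℂ] P ⊗[ℂ] P) with hΔp
  set Δc : C →ₗ[ℂ] C ⊗[ℂ] C := (Coalgebra.comul : C →ₗ[ℂ] C ⊗[ℂ] C) with hΔc
  have hD : ∀ p : P, deltaSigma δ σ p =
      (TensorProduct.map LinearMap.id m)
        ((TensorProduct.assoc ℂ P C C) ((TensorProduct.map δ σ) (Δp p))) := fun p => rfl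
  -- Claim A : the left-hand side, as a function of Δp x, is Ψ ∘ (((Δp ⊗ 1) ∘ δ) ⊗ 1)
  have claimA : ∀ y : P ⊗[ℂ] P,
      (TensorProduct.assoc ℂ P C C)
          ((TensorProduct.map (deltaSigma δ σ) LinearMap.id)
            ((TensorProduct.map LinearMap.id m)
              ((TensorProduct.assoc ℂ P C C) ((TensorProduct.map δ σ) y)))) =
        auxPsi δ σ
          ((TensorProduct.map ((TensorProduct.map Δp LinearMap.id) ∘ₗ δ) LinearMap.id) y) := by
    intro y
    induction y using TensorProduct.induction_on with
    | zero => simp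
    | add a b ha hb => simp only [map_add, ha, hb]
    | tmul p q =>
      have A1 : ∀ t : P ⊗[ℂ] C,
          (TensorProduct.assoc ℂ P C C)
              ((TensorProduct.map (deltaSigma δ σ) LinearMap.id)
                ((TensorProduct.map LinearMap.id m)
                  ((TensorProduct.assoc ℂ P C C) (t ⊗ₜ[ℂ] σ q)))) =
            auxPsi δ σ (((TensorProduct.map Δp LinearMap.id) t) ⊗ₜ[ℂ] q) := by
        intro t
        induction t using TensorProduct.induction_on with
        | zero => simp
        | add a b ha hb =>
          simp only [add_tmul, map_add, ha, hb]
        | tmul p' c =>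
          have A2 : ∀ u : P ⊗[ℂ] P,
              (TensorProduct.assoc ℂ P C C)
                  (((TensorProduct.map LinearMap.id m)
                      ((TensorProduct.assoc ℂ P C C) ((TensorProduct.map δ σ) u)))
                    ⊗ₜ[ℂ] (c * σ q)) =
                auxPsi δ σ ((u ⊗ₜ[ℂ] c) ⊗ₜ[ℂ] q) := by
            intro u
            induction u using TensorProduct.induction_on with
            | zero => simp
            | add a b ha hb =>
              simp only [map_add, add_tmul, ha, hb]
            | tmul p'' q'' =>
              have A3 : ∀ s : P ⊗[ℂ] C,
                  (TensorProduct.assoc ℂ P C C)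
                      (((TensorProduct.map LinearMap.id m)
                          ((TensorProduct.assoc ℂ P C C) (s ⊗ₜ[ℂ] σ q'')))
                        ⊗ₜ[ℂ] (c * σ q)) =
                    (TensorProduct.map LinearMap.id
                        (TensorProduct.map m m))
                      ((TensorProduct.assoc ℂ P (C ⊗[ℂ] C) (C ⊗[ℂ] C))
                        ((TensorProduct.map (TensorProduct.assoc ℂ P C C).toLinearMap
                            LinearMap.id)
                          ((TensorProduct.assoc ℂ ((P ⊗[ℂ] C) ⊗[ℂ] C) C C)
                            (((s ⊗ₜ[ℂ] σ q'') ⊗ₜ[ℂ] c) ⊗ₜ[ℂ] σ q)))) := by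
                intro s
                induction s using TensorProduct.induction_on with
                | zero => simp
                | add a b ha hb =>
                  simp only [map_add, add_tmul, ha, hb]
                | tmul p3 c3 =>
                  simp [hm, LinearMap.mul'_apply]
              have := A3 (δ p'')
              simpa [auxPsi] using this
          have := A2 (Δp p')
          simp only [TensorProduct.map_tmul, LinearMap.id_coe, id_eq,
            LinearEquiv.coe_coe, TensorProduct.assoc_tmul] at this ⊢
          rw [hD p']
          exact this
      have := A1 (δ p)
      simpa using this
  -- h2 as an equality of linear maps
  set R0 : P ⊗[ℂ] P →ₗ[ℂ] (P ⊗[ℂ] P) ⊗[ℂ] C :=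
    (TensorProduct.map LinearMap.id m) ∘ₗ
      (TensorProduct.tensorTensorTensorComm ℂ P C P C).toLinearMap ∘ₗ
        (TensorProduct.map δ δ) with hR0
  have hLR : (TensorProduct.map Δp LinearMap.id) ∘ₗ δ = R0 ∘ₗ Δp := by
    apply LinearMap.ext
    intro p
    simpa [hR0] using h2 p
  have hsplit : ∀ z : P ⊗[ℂ] P,
      (TensorProduct.map (R0 ∘ₗ Δp) LinearMap.id) z =
        (TensorProduct.map R0 LinearMap.id) ((TensorProduct.map Δp LinearMap.id) z) := by
    intro z
    induction z using TensorProduct.induction_on with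
    | zero => simp
    | add a b ha hb => simp only [map_add, ha, hb]
    | tmul p q => simp
  -- Claim C : purely structural comparison of Θ and Ψ
  have claimC : ∀ w : (P ⊗[ℂ] P) ⊗[ℂ] P,
      auxTheta δ σ ((TensorProduct.assoc ℂ P P P) w) =
        auxPsi δ σ ((TensorProduct.map R0 LinearMap.id) w) := by
    intro w
    induction w using TensorProduct.induction_on with
    | zero => simp
    | add a b ha hb => simp only [map_add, ha, hb]
    | tmul u r =>
      induction u using TensorProduct.induction_on with
      | zero => simp
      | add a b ha hb => simp only [map_add, add_tmul, ha, hb]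
      | tmul p q =>
        simp only [auxTheta, auxPsi, hR0, LinearMap.comp_apply, LinearEquiv.coe_coe,
          TensorProduct.assoc_tmul, TensorProduct.map_tmul, LinearMap.id_coe, id_eq]
        generalize δ p = t
        induction t using TensorProduct.induction_on with
        | zero => simp
        | add a b ha hb =>
          simp only [map_add, add_tmul, tmul_add, ha, hb]
        | tmul p' c1 =>
          generalize δ q = s
          induction s using TensorProduct.induction_on with
          | zero => simp
          | add a b ha hb =>
            simp only [map_add, add_tmul, tmul_add, ha, hb]
          | tmul q' c2 =>
            simp only [TensorProduct.map_tmul, LinearMap.id_coe, id_eq,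
              LinearEquiv.coe_coe, TensorProduct.assoc_tmul,
              TensorProduct.tensorTensorTensorComm_tmul]
            generalize δ p' = e
            induction e using TensorProduct.induction_on with
            | zero => simp
            | add a b ha hb =>
              simp only [map_add, add_tmul, tmul_add, ha, hb]
            | tmul p3 c3 =>
              simp [hm, LinearMap.mul'_apply, mul_assoc]
  -- coassociativity of the comultiplication of P
  have hco : (TensorProduct.assoc ℂ P P P) ((TensorProduct.map Δp LinearMap.id) (Δp x)) =
      (TensorProduct.map LinearMap.id Δp) (Δp x) := by
    simpa [LinearMap.rTensor, LinearMap.lTensor] using Coalgebra.coassoc_apply (R := ℂ) x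
  -- multiplication of two elements of C ⊗ C
  have hmul : ∀ z w : C ⊗[ℂ] C,
      z * w = (TensorProduct.map m m)
        ((TensorProduct.tensorTensorTensorComm ℂ C C C C) (z ⊗ₜ[ℂ] w)) := by
    intro z w
    induction z using TensorProduct.induction_on with
    | zero => simp
    | add a b ha hb => simp only [add_mul, add_tmul, map_add, ha, hb]
    | tmul a b =>
      induction w using TensorProduct.induction_on with
      | zero => simp
      | add a' b' ha hb => simp only [mul_add, tmul_add, map_add, ha, hb]
      | tmul a' b' =>
        simp [hm, LinearMap.mul'_apply, Algebra.TensorProduct.tmul_mul_tmul]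
  -- multiplicativity of Δc
  have B1 : ∀ v : P ⊗[ℂ] (C ⊗[ℂ] C),
      (TensorProduct.map LinearMap.id Δc) ((TensorProduct.map LinearMap.id m) v) =
        (TensorProduct.map LinearMap.id (TensorProduct.map m m))
          ((TensorProduct.map LinearMap.id
              (TensorProduct.tensorTensorTensorComm ℂ C C C C).toLinearMap)
            ((TensorProduct.map LinearMap.id (TensorProduct.map Δc Δc)) v)) := by
    intro v
    induction v using TensorProduct.induction_on with
    | zero => simp
    | add a b ha hb => simp only [map_add, ha, hb]
    | tmul p w =>
      induction w using TensorProduct.induction_on with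
      | zero => simp
      | add a b ha hb => simp only [map_add, tmul_add, ha, hb]
      | tmul c1 c2 =>
        simp only [TensorProduct.map_tmul, LinearMap.id_coe, id_eq, hm,
          LinearMap.mul'_apply, LinearEquiv.coe_coe]
        rw [hΔc, Bialgebra.comul_mul, hmul]
  -- naturality step
  have B2 : ∀ (t : P ⊗[ℂ] C) (c : C),
      (TensorProduct.map LinearMap.id (TensorProduct.map Δc Δc))
          ((TensorProduct.assoc ℂ P C C) (t ⊗ₜ[ℂ] c)) =
        (TensorProduct.assoc ℂ P (C ⊗[ℂ] C) (C ⊗[ℂ] C))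
          (((TensorProduct.map LinearMap.id Δc) t) ⊗ₜ[ℂ] Δc c) := by
    intro t c
    induction t using TensorProduct.induction_on with
    | zero => simp
    | add a b ha hb => simp only [map_add, add_tmul, ha, hb]
    | tmul p' c' => simp
  have hcollapse : ∀ v : P ⊗[ℂ] (C ⊗[ℂ] C),
      (TensorProduct.map σ LinearMap.id) ((TensorProduct.map LinearMap.id m) v) =
        (TensorProduct.map σ m) v := by
    intro v
    induction v using TensorProduct.induction_on with
    | zero => simp
    | add a b ha hb => simp only [map_add, ha, hb]
    | tmul p w => simp
  -- Claim B : the right-hand side, as a function of Δp x, is Θ ∘ (1 ⊗ Δp)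
  have claimB : ∀ y : P ⊗[ℂ] P,
      (TensorProduct.map LinearMap.id Δc)
          ((TensorProduct.map LinearMap.id m)
            ((TensorProduct.assoc ℂ P C C) ((TensorProduct.map δ σ) y))) =
        auxTheta δ σ ((TensorProduct.map LinearMap.id Δp) y) := by
    intro y
    induction y using TensorProduct.induction_on with
    | zero => simp
    | add a b ha hb => simp only [map_add, ha, hb]
    | tmul p q =>
      rw [TensorProduct.map_tmul, B1, B2 (δ p) (σ q), ← h1 p, h3 q, hD q, hcollapse]
      simp [auxTheta, hm]
  -- assemble everything
  rw [hD x, claimA (Δp x), hLR, hsplit (Δp x), ← claimC, hco, ← claimB (Δp x)]
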